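/- Assuming the Higher-order Carlson–Simpson Lemma of dimension 2^n + n - 1 over the unary alphabet {0} for all numbers of colors, the following holds: for every finite triangle-free graph F on n vertices there exists ℓ ∈ ℕ such that for every k > 0 and every coloring χ of the embeddings of F into the universal triangle-free graph 𝔾 (realized on 1-variable words over {0} with the passing-number edge relation) with k colors, there is an embedding f of 𝔾 into itself such that χ takes at most ℓ values on embeddings of F into f(𝔾). -/

import Mathlib

/-!
Let `W` be an ω-variable word. A copy of `F` inside `W[𝔾]` has vertices `W[v_t]`, and the
words `v_t` have an envelope: an `m`-variable word `U`, `m = 2 ^ n + n - 1`, with `v_t = U[s_t]`.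
`U` has one variable for each non-empty set `X` of vertices, standing where exactly the `v_t`,
`t ∈ X`, carry `x₀`, and one for each length of a word `v_t` below the maximal one; the maximal
length is marked by one more variable. Hence the copy is `t ↦ W[U][s_t]` and its colour is a
function of the word `W[U]` and of the pattern `(s_t)_t`, which ranges over a finite set. Colour
each word `w` by the map sending a pattern to the colour of the copy it realises at `w`; `CSL^m`
gives `W` making this colouring constant on all `W[U]`, so that only one colour per pattern is
left.
-/

/-- Words over the unary alphabet `{0}` are lists over `Option ℕ`, where `none`
is the letter `0` and `some j` is the variable `x_j`. `w` is an `m`-variable word: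
exactly the variables `x_j`, `j < m`, occur, each at least once, with the first
occurrence of `x_{j+1}` preceded by an occurrence of `x_j`. -/
def IsMVarWord (m : ℕ) (w : List (Option ℕ)) : Prop :=
  (∀ j : ℕ, some j ∈ w → j < m) ∧ (∀ j < m, some j ∈ w) ∧
    (∀ i < w.length, ∀ j : ℕ, w[i]? = some (some (j + 1)) →
      ∃ i' < i, w[i']? = some (some j))

/-- `W : ℕ → Option ℕ` is an ω-variable word over `{0}`, with `fo j` the first
occurrence of the variable `x_j`, first occurrences being in increasing order. -/
def IsOmegaVW (W : ℕ → Option ℕ) (fo : ℕ → ℕ) : Prop :=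
  (∀ j, W (fo j) = some j) ∧ (∀ j i, i < fo j → W i ≠ some j) ∧
    (∀ j, fo j < fo (j + 1))

/-- The substitution `W[u]`: replace each occurrence of `x_j` (`j < |u|`) by `u(j)`
and truncate just before the first occurrence of `x_{|u|}`. -/
def substW (W : ℕ → Option ℕ) (fo : ℕ → ℕ) (u : List (Option ℕ)) :
    List (Option ℕ) :=
  (List.range (fo u.length)).map (fun i =>
    match W i with
    | none => none
    | some j => u.getD j (some j))

/-- The edge condition for `|v| < |w|`: the passing number `w(|v|)` is the
variable `x₀`, and there is no `i < |v|` with `v(i) = w(i) = x₀`. -/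
def EdgeLt (v w : List (Option ℕ)) : Prop :=
  v.length < w.length ∧ w.getD v.length none = some 0 ∧
    ¬ ∃ i < v.length, v.getD i none = some 0 ∧ w.getD i none = some 0

/-- The universal triangle-free graph `𝔾`, realized on the `1`-variable words
over `{0}` with the passing-number edge relation. -/
def HG : SimpleGraph {w : List (Option ℕ) // IsMVarWord 1 w} where
  Adj v w := EdgeLt v.1 w.1 ∨ EdgeLt w.1 v.1
  symm := ⟨fun v w h => Or.symm h⟩
  loopless := by
    constructor
    intro v h
    rcases h with h | h <;> exact absurd h.1 (lt_irrefl _)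

lemma List.getElem_ne_of_lt_idxOf {α : Type*} [BEq α] [LawfulBEq α] {l : List α} {a : α}
    {i : ℕ} (h : i < l.idxOf a) (hi : i < l.length) : l[i] ≠ a := by
  simpa using List.not_of_lt_findIdx (p := fun x => x == a) h

lemma List.idxOf_eq_of_getElem {α : Type*} [BEq α] [LawfulBEq α] {l : List α} {a : α}
    {i : ℕ} (hi : i < l.length) (h : l[i] = a)
    (hlt : ∀ j (hj : j < i), l[j]'(hj.trans hi) ≠ a) : l.idxOf a = i :=
  (List.findIdx_eq hi).2 ⟨by simpa using h, fun j hj => by simpa using hlt j hj⟩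

def OnlyX0 (w : List (Option ℕ)) : Prop := ∀ j, some j ∈ w → j = 0

lemma isMVarWord_one_iff {w : List (Option ℕ)} : IsMVarWord 1 w ↔ OnlyX0 w ∧ some 0 ∈ w := by
  refine ⟨fun h => ⟨fun j hj => Nat.lt_one_iff.mp (h.1 j hj), h.2.1 0 one_pos⟩,
    fun ⟨h, h0⟩ => ⟨fun j hj => by simp [h j hj], fun j hj => ?_, fun i _ j hij => ?_⟩⟩
  · rwa [Nat.lt_one_iff.mp hj]
  · exact absurd (h _ (List.mem_of_getElem? hij)) j.succ_ne_zero

def substLetter (s : List (Option ℕ)) : Option ℕ → Option ℕ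
  | none => none
  | some j => s.getD j (some j)

lemma substW_length (W : ℕ → Option ℕ) (fo : ℕ → ℕ) (u : List (Option ℕ)) :
    (substW W fo u).length = fo u.length := by
  simp [substW]

lemma getElem_substW (W : ℕ → Option ℕ) (fo : ℕ → ℕ) (u : List (Option ℕ)) {i : ℕ}
    (hi : i < (substW W fo u).length) : (substW W fo u)[i] = substLetter u (W i) := by
  simp only [substW, List.getElem_map, List.getElem_range]
  rfl

namespace IsOmegaVW

variable {W : ℕ → Option ℕ} {fo : ℕ → ℕ}

lemma strictMono (hW : IsOmegaVW W fo) : StrictMono fo :=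
  strictMono_nat_of_lt_succ hW.2.2

lemma le_of_eq_some (hW : IsOmegaVW W fo) {i j : ℕ} (h : W i = some j) : fo j ≤ i :=
  not_lt.mp fun hlt => hW.2.1 j i hlt h

lemma lt_of_eq_some (hW : IsOmegaVW W fo) {i j k : ℕ} (hi : i < fo k) (h : W i = some j) :
    j < k :=
  hW.strictMono.lt_iff_lt.mp ((hW.le_of_eq_some h).trans_lt hi)

lemma getD_substW (hW : IsOmegaVW W fo) {u : List (Option ℕ)} {i : ℕ}
    (hi : i < fo u.length) : (substW W fo u).getD i none = (W i).bind (u.getD · none) := by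
  rw [List.getD_eq_getElem _ _ (by rwa [substW_length]), getElem_substW]
  rcases hWi : W i with _ | j
  · rfl
  · have hj : j < u.length := hW.lt_of_eq_some hi hWi
    simp only [substLetter, Option.bind_some, List.getD_eq_getElem _ _ hj]

lemma getD_substW_fo (hW : IsOmegaVW W fo) {u : List (Option ℕ)} {j : ℕ}
    (hj : j < u.length) : (substW W fo u).getD (fo j) none = u.getD j none := by
  rw [hW.getD_substW (hW.strictMono hj), hW.1 j, Option.bind_some]

lemma mem_substW_of_mem (hW : IsOmegaVW W fo) {u : List (Option ℕ)} {a : Option ℕ}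
    (ha : a ∈ u) : a ∈ substW W fo u := by
  obtain ⟨j, hj, rfl⟩ := List.getElem_of_mem ha
  have h := hW.getD_substW_fo hj
  rw [List.getD_eq_getElem _ _ hj, List.getD_eq_getElem _ _ (by
    rw [substW_length]; exact hW.strictMono hj)] at h
  exact h ▸ List.getElem_mem _

lemma onlyX0_substW (hW : IsOmegaVW W fo) {u : List (Option ℕ)} (hu : OnlyX0 u) :
    OnlyX0 (substW W fo u) := by
  intro j hj
  obtain ⟨i, hi, hij⟩ := List.getElem_of_mem hj
  rw [substW_length] at hi
  have h := hW.getD_substW hi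
  rw [List.getD_eq_getElem _ _ (by rwa [substW_length]), hij] at h
  obtain ⟨j', hWi, hj'⟩ := Option.bind_eq_some_iff.mp h.symm
  have hj'u : j' < u.length := hW.lt_of_eq_some hi hWi
  rw [List.getD_eq_getElem _ _ hj'u] at hj'
  exact hu j (hj' ▸ List.getElem_mem hj'u)

lemma isMVarWord_one_substW (hW : IsOmegaVW W fo) {u : List (Option ℕ)}
    (hu : IsMVarWord 1 u) : IsMVarWord 1 (substW W fo u) := by
  rw [isMVarWord_one_iff] at hu ⊢
  exact ⟨hW.onlyX0_substW hu.1, hW.mem_substW_of_mem hu.2⟩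

lemma edgeLt_substW_iff (hW : IsOmegaVW W fo) {v w : List (Option ℕ)} :
    EdgeLt (substW W fo v) (substW W fo w) ↔ EdgeLt v w := by
  simp only [EdgeLt, substW_length, hW.strictMono.lt_iff_lt]
  refine and_congr_right fun hvw => and_congr (by rw [hW.getD_substW_fo hvw]) (not_congr ?_)
  constructor
  · rintro ⟨i, hi, hvi, hwi⟩
    rw [hW.getD_substW hi] at hvi
    rw [hW.getD_substW (hi.trans (hW.strictMono hvw))] at hwi
    obtain ⟨j, hWi, hvj⟩ := Option.bind_eq_some_iff.mp hvi
    rw [hWi, Option.bind_some] at hwi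
    exact ⟨j, hW.lt_of_eq_some hi hWi, hvj, hwi⟩
  · rintro ⟨j, hj, hvj, hwj⟩
    exact ⟨fo j, hW.strictMono hj, by rwa [hW.getD_substW_fo hj],
      by rwa [hW.getD_substW_fo (hj.trans hvw)]⟩

lemma substW_injective (hW : IsOmegaVW W fo) : Function.Injective (substW W fo) := by
  intro v w h
  have hlen : v.length = w.length :=
    hW.strictMono.injective (by simpa only [substW_length] using congrArg List.length h)
  refine List.ext_getElem hlen fun j hjv hjw => ?_
  have := congrArg (·.getD (fo j) none) h
  simp only [hW.getD_substW_fo hjv, hW.getD_substW_fo hjw] at this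
  rwa [List.getD_eq_getElem _ _ hjv, List.getD_eq_getElem _ _ hjw] at this

def embedding (hW : IsOmegaVW W fo) : HG ↪g HG where
  toFun v := ⟨substW W fo v.1, hW.isMVarWord_one_substW v.2⟩
  inj' _ _ h := Subtype.ext (hW.substW_injective (congrArg Subtype.val h))
  map_rel_iff' {a b} := by
    change EdgeLt (substW W fo a.1) (substW W fo b.1) ∨
        EdgeLt (substW W fo b.1) (substW W fo a.1) ↔ EdgeLt a.1 b.1 ∨ EdgeLt b.1 a.1
    rw [hW.edgeLt_substW_iff, hW.edgeLt_substW_iff]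

lemma embedding_apply_val (hW : IsOmegaVW W fo) (v : {w // IsMVarWord 1 w}) :
    (hW.embedding v).1 = substW W fo v.1 := rfl

end IsOmegaVW

/-- `u[s]`, truncated just before the first occurrence of `x_{|s|}` (all of `u` if there is
none). -/
def substList (u s : List (Option ℕ)) : List (Option ℕ) :=
  (u.take (u.idxOf (some s.length))).map (substLetter s)

lemma substList_length_of_mem {u s : List (Option ℕ)} (h : some s.length ∈ u) :
    (substList u s).length = u.idxOf (some s.length) := by
  simp [substList, (List.idxOf_lt_length_of_mem h).le]

lemma getElem_substList (u s : List (Option ℕ)) {i : ℕ} (hi : i < (substList u s).length) :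
    (substList u s)[i] = substLetter s (u[i]'(by simp [substList] at hi; omega)) := by
  simp only [substList, List.getElem_map, List.getElem_take]

lemma IsOmegaVW.idxOf_substW {W : ℕ → Option ℕ} {fo : ℕ → ℕ} (hW : IsOmegaVW W fo)
    {u : List (Option ℕ)} {a : ℕ} (ha : some a ∈ u) :
    (substW W fo u).idxOf (some a) = fo (u.idxOf (some a)) := by
  have hp := List.idxOf_lt_length_of_mem ha
  have hfp : fo (u.idxOf (some a)) < (substW W fo u).length := by
    rw [substW_length]; exact hW.strictMono hp
  refine List.idxOf_eq_of_getElem hfp ?_ fun i hi => ?_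
  · rw [getElem_substW, hW.1, substLetter, List.getD_eq_getElem _ _ hp, List.getElem_idxOf]
  · rw [getElem_substW]
    rcases hWi : W i with _ | j
    · simp [substLetter]
    · have hj := hW.lt_of_eq_some hi hWi
      rw [substLetter, List.getD_eq_getElem _ _ (hj.trans hp)]
      exact List.getElem_ne_of_lt_idxOf hj _

lemma IsOmegaVW.substList_substW {W : ℕ → Option ℕ} {fo : ℕ → ℕ} (hW : IsOmegaVW W fo)
    {u s : List (Option ℕ)} (hs : some s.length ∈ u) :
    substList (substW W fo u) s = substW W fo (substList u s) := by
  set p := u.idxOf (some s.length)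
  have hp : p < u.length := List.idxOf_lt_length_of_mem hs
  have hlen : (substList u s).length = p := substList_length_of_mem hs
  have hlen' : (substList (substW W fo u) s).length = fo p := by
    rw [substList_length_of_mem (hW.mem_substW_of_mem hs), hW.idxOf_substW hs]
  refine List.ext_getElem (by rw [hlen', substW_length, hlen]) fun i h₁ h₂ => ?_
  have hi : i < fo p := hlen' ▸ h₁
  rw [getElem_substList, getElem_substW, getElem_substW]
  rcases hWi : W i with _ | j
  · rfl
  · have hj : j < p := hW.lt_of_eq_some hi hWi
    simp only [substLetter, List.getD_eq_getElem _ _ (hj.trans hp),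
      List.getD_eq_getElem _ _ (hlen ▸ hj : j < (substList u s).length), getElem_substList]

lemma OnlyX0.getD_eq_none_or {w : List (Option ℕ)} (hw : OnlyX0 w) (i : ℕ) :
    w.getD i none = none ∨ w.getD i none = some 0 := by
  rcases h : w.getD i none with _ | j
  · exact Or.inl rfl
  · refine Or.inr (congrArg some (hw j ?_))
    rw [List.getD_eq_getElem?_getD, Option.getD_eq_iff] at h
    rcases h with h | ⟨-, h⟩
    · exact List.mem_of_getElem? h
    · exact absurd h (by simp)

lemma OnlyX0.getD_eq_getD {w : List (Option ℕ)} (hw : OnlyX0 w) {i i' : ℕ}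
    (h : w.getD i none = some 0 ↔ w.getD i' none = some 0) :
    w.getD i none = w.getD i' none := by
  rcases hw.getD_eq_none_or i with hi | hi <;> rcases hw.getD_eq_none_or i' with hi' | hi' <;>
    simp_all

namespace Envelope

open Finset

variable {ι : Type*} [Fintype ι] (v : ι → List (Option ℕ))

def maxLength : ℕ := univ.sup fun t => (v t).length

def x0Set (i : ℕ) : Finset ι := {t | (v t).getD i none = some 0}

/-- The envelope has one variable for each non-empty `X ⊆ ι`, occupying the positions `i` with
`x0Set v i = X`, and one variable `inr i` for each length `i` of a word `v t`. -/
def key (i : ℕ) : Option (Finset ι ⊕ ℕ) :=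
  if ∃ t, (v t).length = i then some (.inr i)
  else if (x0Set v i).Nonempty then some (.inl (x0Set v i)) else none

noncomputable def firstPos (κ : Finset ι ⊕ ℕ) : ℕ := sInf {i | key v i = some κ}

def Occurs (κ : Finset ι ⊕ ℕ) : Prop := ∃ i < maxLength v, key v i = some κ

open Classical in
noncomputable def firstPositions : Finset ℕ :=
  {i ∈ range (maxLength v) | (key v i).isSome ∧ ∀ i' < i, key v i' ≠ key v i}

noncomputable def numVars : ℕ := #(firstPositions v)

noncomputable def rankIso : Fin (numVars v) ≃o firstPositions v :=
  (firstPositions v).orderIsoOfFin rfl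

/-- Variables are numbered in the order of their first occurrences, as in an `m`-variable word. -/
noncomputable def varIndex (κ : Finset ι ⊕ ℕ) : ℕ :=
  if h : firstPos v κ ∈ firstPositions v then (rankIso v).symm ⟨_, h⟩ else 0

noncomputable def varPos (q : ℕ) : ℕ :=
  if h : q < numVars v then rankIso v ⟨q, h⟩ else 0

noncomputable def envLetter (i : ℕ) : Option ℕ :=
  if i < maxLength v then (key v i).map (varIndex v) else some (numVars v + (i - maxLength v))

/-- The envelope `U` of the words `v t`, padded by the variables `x_j`, `numVars v ≤ j < m`. -/
noncomputable def envelope (m : ℕ) : List (Option ℕ) :=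
  (List.range (maxLength v + (m - numVars v))).map (envLetter v)

/-- `U[s]` is cut at the first `x_{|s|}`, so the argument for `v t` has as length the index of the
variable at position `|v t|` of the envelope. -/
noncomputable def cutVar (t : ι) : ℕ :=
  if (v t).length = maxLength v then numVars v else varIndex v (.inr (v t).length)

noncomputable def envelopeArg (t : ι) : List (Option ℕ) :=
  (List.range (cutVar v t)).map fun q => (v t).getD (varPos v q) none

variable {v}

lemma mem_x0Set {i : ℕ} {t : ι} : t ∈ x0Set v i ↔ (v t).getD i none = some 0 := by
  simp [x0Set]

lemma key_of_length_eq {i : ℕ} {t : ι} (h : (v t).length = i) : key v i = some (.inr i) :=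
  if_pos ⟨t, h⟩

lemma key_eq_some_inr {i i' : ℕ} (h : key v i = some (.inr i')) :
    i' = i ∧ ∃ t, (v t).length = i := by
  unfold key at h
  split_ifs at h with h₁ h₂ <;> simp_all

lemma key_eq_some_inl {i : ℕ} {X : Finset ι} (h : key v i = some (.inl X)) :
    X = x0Set v i ∧ X.Nonempty := by
  unfold key at h
  split_ifs at h with h₁ h₂ <;> simp_all

lemma key_eq_none {i : ℕ} (h : key v i = none) (t : ι) : (v t).getD i none ≠ some 0 := by
  intro ht
  unfold key at h
  split_ifs at h with h₁ h₂
  exact h₂ ⟨t, mem_x0Set.mpr ht⟩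

lemma key_firstPos {κ : Finset ι ⊕ ℕ} {i : ℕ} (h : key v i = some κ) :
    key v (firstPos v κ) = some κ :=
  Nat.sInf_mem (s := {i | key v i = some κ}) ⟨i, h⟩

lemma firstPos_le {κ : Finset ι ⊕ ℕ} {i : ℕ} (h : key v i = some κ) : firstPos v κ ≤ i :=
  Nat.sInf_le h

lemma Occurs.key_firstPos {κ : Finset ι ⊕ ℕ} (h : Occurs v κ) : key v (firstPos v κ) = some κ :=
  Envelope.key_firstPos h.choose_spec.2

lemma Occurs.firstPos_lt {κ : Finset ι ⊕ ℕ} (h : Occurs v κ) : firstPos v κ < maxLength v :=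
  (firstPos_le h.choose_spec.2).trans_lt h.choose_spec.1

lemma firstPos_inr {i : ℕ} (h : key v i = some (.inr i)) : firstPos v (.inr i) = i :=
  le_antisymm (firstPos_le h) (key_eq_some_inr (key_firstPos h)).1.le

lemma mem_firstPositions {i : ℕ} :
    i ∈ firstPositions v ↔ i < maxLength v ∧ ∃ κ, key v i = some κ ∧ firstPos v κ = i := by
  simp only [firstPositions, mem_filter, mem_range, and_congr_right_iff]
  intro _
  constructor
  · rintro ⟨hsome, hmin⟩
    obtain ⟨κ, hκ⟩ := Option.isSome_iff_exists.mp hsome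
    refine ⟨κ, hκ, (firstPos_le hκ).eq_or_lt.resolve_right fun hlt => ?_⟩
    exact hmin _ hlt (by rw [key_firstPos hκ, hκ])
  · rintro ⟨κ, hκ, rfl⟩
    refine ⟨by rw [hκ]; rfl, fun i' hi' h => ?_⟩
    rw [key_firstPos hκ] at h
    exact Nat.notMem_of_lt_sInf hi' h

lemma Occurs.firstPos_mem {κ : Finset ι ⊕ ℕ} (h : Occurs v κ) :
    firstPos v κ ∈ firstPositions v :=
  mem_firstPositions.mpr ⟨h.firstPos_lt, κ, h.key_firstPos, rfl⟩

lemma Occurs.varIndex_eq {κ : Finset ι ⊕ ℕ} (h : Occurs v κ) :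
    varIndex v κ = (rankIso v).symm ⟨_, h.firstPos_mem⟩ :=
  dif_pos h.firstPos_mem

lemma Occurs.varIndex_lt {κ : Finset ι ⊕ ℕ} (h : Occurs v κ) : varIndex v κ < numVars v := by
  rw [h.varIndex_eq]; exact Fin.is_lt _

lemma Occurs.varIndex_lt_varIndex_iff {κ κ' : Finset ι ⊕ ℕ} (h : Occurs v κ)
    (h' : Occurs v κ') : varIndex v κ < varIndex v κ' ↔ firstPos v κ < firstPos v κ' := by
  rw [h.varIndex_eq, h'.varIndex_eq, ← Fin.lt_def, OrderIso.lt_iff_lt, Subtype.mk_lt_mk]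

lemma Occurs.varPos_varIndex {κ : Finset ι ⊕ ℕ} (h : Occurs v κ) :
    varPos v (varIndex v κ) = firstPos v κ := by
  rw [varPos, dif_pos h.varIndex_lt]
  simp [h.varIndex_eq]

lemma exists_occurs_varIndex_eq {q : ℕ} (hq : q < numVars v) :
    ∃ κ, Occurs v κ ∧ varIndex v κ = q := by
  set x := rankIso v ⟨q, hq⟩
  obtain ⟨hxL, κ, hκ, hpos⟩ := mem_firstPositions.mp x.2
  have hocc : Occurs v κ := ⟨x, hxL, hκ⟩
  refine ⟨κ, hocc, ?_⟩
  rw [hocc.varIndex_eq]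
  simp [hpos, x]

lemma key_injOn_firstPositions : Set.InjOn (key v) (firstPositions v) := by
  intro i hi i' hi' h
  obtain ⟨-, κ, hκ, rfl⟩ := mem_firstPositions.mp hi
  obtain ⟨-, κ', hκ', rfl⟩ := mem_firstPositions.mp hi'
  rw [hκ, hκ', Option.some_inj] at h
  rw [h]

lemma maxLength_mem_image [Nonempty ι] : maxLength v ∈ univ.image fun t => (v t).length := by
  obtain ⟨t, -, ht⟩ := exists_mem_eq_sup univ univ_nonempty fun t => (v t).length
  exact mem_image.mpr ⟨t, mem_univ _, ht.symm⟩

/-- There are at most `2 ^ |ι| - 1` keys `inl X`, and at most `|ι| - 1` keys `inr i` with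
`i < maxLength v`. -/
lemma numVars_add_two_le [Nonempty ι] :
    numVars v + 2 ≤ 2 ^ Fintype.card ι + Fintype.card ι := by
  classical
  set lengths := univ.image fun t => (v t).length
  set A : Finset (Option (Finset ι ⊕ ℕ)) := (univ.erase ∅).image fun X => some (.inl X)
  set B : Finset (Option (Finset ι ⊕ ℕ)) :=
    (lengths.erase (maxLength v)).image fun i => some (.inr i)
  have hmaps : Set.MapsTo (key v) (firstPositions v) (A ∪ B : Finset _) := by
    intro i hi
    obtain ⟨hiL, κ, hκ, -⟩ := mem_firstPositions.mp hi
    rw [mem_coe, hκ]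
    rcases κ with X | i'
    · exact mem_union_left _ <| mem_image_of_mem _ <|
        mem_erase.mpr ⟨(key_eq_some_inl hκ).2.ne_empty, mem_univ _⟩
    · obtain ⟨rfl, t, ht⟩ := key_eq_some_inr hκ
      exact mem_union_right _ <| mem_image_of_mem _ <|
        mem_erase.mpr ⟨hiL.ne, mem_image.mpr ⟨t, mem_univ _, ht⟩⟩
  have hA : #A ≤ 2 ^ Fintype.card ι - 1 := card_image_le.trans <| by
    rw [card_erase_of_mem (mem_univ _), card_univ, Fintype.card_finset]
  have hB : #B ≤ Fintype.card ι - 1 := card_image_le.trans <| by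
    rw [card_erase_of_mem maxLength_mem_image]
    exact Nat.sub_le_sub_right (card_image_le.trans_eq (card_univ)) 1
  have hcard := (card_le_card_of_injOn _ hmaps key_injOn_firstPositions).trans
    (card_union_le A B)
  have := Nat.one_le_two_pow (n := Fintype.card ι)
  have := Fintype.card_pos (α := ι)
  unfold numVars
  omega

lemma envelope_length (m : ℕ) :
    (envelope v m).length = maxLength v + (m - numVars v) := by
  simp [envelope]

lemma getElem_envelope {m i : ℕ} (hi : i < (envelope v m).length) :
    (envelope v m)[i] = envLetter v i := by
  simp [envelope]

lemma mem_envelope {m : ℕ} {a : Option ℕ} :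
    a ∈ envelope v m ↔ ∃ i < maxLength v + (m - numVars v), envLetter v i = a := by
  simp [envelope]

lemma envLetter_of_lt {i : ℕ} (hi : i < maxLength v) :
    envLetter v i = (key v i).map (varIndex v) :=
  if_pos hi

lemma envLetter_of_le {i : ℕ} (hi : maxLength v ≤ i) :
    envLetter v i = some (numVars v + (i - maxLength v)) :=
  if_neg hi.not_gt

lemma Occurs.envLetter_firstPos {κ : Finset ι ⊕ ℕ} (h : Occurs v κ) :
    envLetter v (firstPos v κ) = some (varIndex v κ) := by
  rw [envLetter_of_lt h.firstPos_lt, h.key_firstPos, Option.map_some]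

lemma exists_lt_envLetter_eq {i j : ℕ} (h : envLetter v i = some (j + 1)) :
    ∃ i' < i, envLetter v i' = some j := by
  by_cases hi : i < maxLength v
  · rw [envLetter_of_lt hi] at h
    obtain ⟨κ, hκ, hj⟩ := Option.map_eq_some_iff.mp h
    have hocc : Occurs v κ := ⟨i, hi, hκ⟩
    obtain ⟨κ', hocc', hj'⟩ := exists_occurs_varIndex_eq (v := v) (q := j)
      (by have := hocc.varIndex_lt; omega)
    refine ⟨firstPos v κ', ?_, hj' ▸ hocc'.envLetter_firstPos⟩
    exact ((hocc'.varIndex_lt_varIndex_iff hocc).mp (by omega)).trans_le (firstPos_le hκ)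
  · rw [envLetter_of_le (not_lt.mp hi), Option.some_inj] at h
    rcases Nat.eq_zero_or_pos (i - maxLength v) with h0 | hpos
    · obtain ⟨κ, hocc, hj⟩ := exists_occurs_varIndex_eq (v := v) (q := j) (by omega)
      exact ⟨firstPos v κ, hocc.firstPos_lt.trans_le (not_lt.mp hi),
        hj ▸ hocc.envLetter_firstPos⟩
    · refine ⟨i - 1, by omega, ?_⟩
      rw [envLetter_of_le (by omega)]
      congr 1
      omega

lemma isMVarWord_envelope {m : ℕ} (hm : numVars v ≤ m) : IsMVarWord m (envelope v m) := by
  refine ⟨fun j hj => ?_, fun j hj => mem_envelope.mpr ?_, fun i _ j hij => ?_⟩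
  · obtain ⟨i, hi, hij⟩ := mem_envelope.mp hj
    by_cases hiL : i < maxLength v
    · rw [envLetter_of_lt hiL] at hij
      obtain ⟨κ, hκ, rfl⟩ := Option.map_eq_some_iff.mp hij
      exact (Occurs.varIndex_lt ⟨i, hiL, hκ⟩).trans_le hm
    · rw [envLetter_of_le (not_lt.mp hiL), Option.some_inj] at hij
      omega
  · by_cases hj' : j < numVars v
    · obtain ⟨κ, hocc, rfl⟩ := exists_occurs_varIndex_eq hj'
      exact ⟨firstPos v κ, by have := hocc.firstPos_lt; omega, hocc.envLetter_firstPos⟩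
    · refine ⟨maxLength v + (j - numVars v), by omega, ?_⟩
      rw [envLetter_of_le (by omega)]
      congr 1
      omega
  · obtain ⟨hi, hij⟩ := List.getElem?_eq_some_iff.mp hij
    rw [getElem_envelope] at hij
    obtain ⟨i', hi', h⟩ := exists_lt_envLetter_eq hij
    exact ⟨i', hi', List.getElem?_eq_some_iff.mpr ⟨hi'.trans hi, by rwa [getElem_envelope]⟩⟩

lemma length_le_maxLength (t : ι) : (v t).length ≤ maxLength v :=
  le_sup (f := fun t => (v t).length) (mem_univ t)

lemma occurs_inr {t : ι} (h : (v t).length < maxLength v) : Occurs v (.inr (v t).length) :=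
  ⟨_, h, key_of_length_eq rfl⟩

lemma envLetter_length (t : ι) : envLetter v (v t).length = some (cutVar v t) := by
  unfold cutVar
  split_ifs with h
  · rw [envLetter_of_le h.ge, h, Nat.sub_self, add_zero]
  · have := (occurs_inr ((length_le_maxLength t).lt_of_ne h)).envLetter_firstPos
    rwa [firstPos_inr (key_of_length_eq rfl)] at this

lemma varIndex_lt_cutVar {t : ι} {i : ℕ} {κ : Finset ι ⊕ ℕ} (hκ : key v i = some κ)
    (hi : i < (v t).length) : varIndex v κ < cutVar v t := by
  have hocc : Occurs v κ := ⟨i, hi.trans_le (length_le_maxLength t), hκ⟩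
  unfold cutVar
  split_ifs with h
  · exact hocc.varIndex_lt
  · rw [hocc.varIndex_lt_varIndex_iff (occurs_inr ((length_le_maxLength t).lt_of_ne h)),
      firstPos_inr (key_of_length_eq rfl)]
    exact (firstPos_le hκ).trans_lt hi

lemma cutVar_le (t : ι) : cutVar v t ≤ numVars v := by
  unfold cutVar
  split_ifs with h
  · exact le_rfl
  · exact (occurs_inr ((length_le_maxLength t).lt_of_ne h)).varIndex_lt.le

lemma idxOf_envelope {m : ℕ} (hm : numVars v < m) (t : ι) :
    (envelope v m).idxOf (some (cutVar v t)) = (v t).length := by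
  have hlen : (v t).length < (envelope v m).length := by
    rw [envelope_length]; have := length_le_maxLength (v := v) t; omega
  refine List.idxOf_eq_of_getElem hlen (by rw [getElem_envelope, envLetter_length]) ?_
  intro i hi h
  have hiL : i < maxLength v := hi.trans_le (length_le_maxLength t)
  rw [getElem_envelope, envLetter_of_lt hiL] at h
  obtain ⟨κ, hκ, hκt⟩ := Option.map_eq_some_iff.mp h
  exact (varIndex_lt_cutVar hκ hi).ne hκt

lemma envelopeArg_length (t : ι) : (envelopeArg v t).length = cutVar v t := by
  simp [envelopeArg]

lemma getD_envelopeArg {t : ι} (hv : OnlyX0 (v t)) {i : ℕ} {κ : Finset ι ⊕ ℕ}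
    (hκ : key v i = some κ) (hi : i < (v t).length) (a : Option ℕ) :
    (envelopeArg v t).getD (varIndex v κ) a = (v t).getD i none := by
  have hocc : Occurs v κ := ⟨i, hi.trans_le (length_le_maxLength t), hκ⟩
  rw [List.getD_eq_getElem _ _ (by rw [envelopeArg_length]; exact varIndex_lt_cutVar hκ hi)]
  simp only [envelopeArg, List.getElem_map, List.getElem_range, hocc.varPos_varIndex]
  refine hv.getD_eq_getD ?_
  rcases κ with X | i'
  · rw [← mem_x0Set, ← mem_x0Set, ← (key_eq_some_inl hocc.key_firstPos).1,
      ← (key_eq_some_inl hκ).1]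
  · obtain ⟨rfl, -⟩ := key_eq_some_inr hκ
    rw [firstPos_inr hκ]

lemma onlyX0_envelopeArg {t : ι} (hv : OnlyX0 (v t)) : OnlyX0 (envelopeArg v t) := by
  intro j hj
  obtain ⟨q, -, hq⟩ := List.mem_map.mp hj
  rcases hv.getD_eq_none_or (varPos v q) with h | h <;> rw [h] at hq
  · exact absurd hq (by simp)
  · exact (Option.some_inj.mp hq).symm

lemma substList_envelope {t : ι} (hv : OnlyX0 (v t)) {m : ℕ} (hm : numVars v < m) :
    substList (envelope v m) (envelopeArg v t) = v t := by
  have hmem : some (envelopeArg v t).length ∈ envelope v m := by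
    rw [envelopeArg_length]; exact (isMVarWord_envelope hm.le).2.1 _ ((cutVar_le t).trans_lt hm)
  have hlen : (substList (envelope v m) (envelopeArg v t)).length = (v t).length := by
    rw [substList_length_of_mem hmem, envelopeArg_length, idxOf_envelope hm]
  refine List.ext_getElem hlen fun i hi hit => ?_
  have hiL : i < maxLength v := hit.trans_le (length_le_maxLength t)
  rw [getElem_substList, getElem_envelope, envLetter_of_lt hiL, ← List.getD_eq_getElem _ none]
  rcases hκ : key v i with _ | κ
  · exact ((hv.getD_eq_none_or i).resolve_right (key_eq_none hκ t)).symm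
  · exact getD_envelopeArg hv hκ hit _

end Envelope

open Envelope in
theorem exists_envelope {ι : Type*} [Fintype ι] [Nonempty ι] {m : ℕ}
    (hm : 2 ^ Fintype.card ι + Fintype.card ι - 1 ≤ m) (v : ι → List (Option ℕ))
    (hv : ∀ t, OnlyX0 (v t)) :
    ∃ U, IsMVarWord m U ∧ ∀ t, ∃ s : List (Option ℕ), s.length < m ∧ OnlyX0 s ∧
      substList U s = v t := by
  replace hm : numVars v < m := by
    have := numVars_add_two_le (v := v); omega
  exact ⟨envelope v m, isMVarWord_envelope hm.le, fun t => ⟨envelopeArg v t,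
    by rw [envelopeArg_length]; exact (cutVar_le t).trans_lt hm, onlyX0_envelopeArg (hv t),
    substList_envelope (hv t) hm⟩⟩

def patterns (m : ℕ) : Set (List (Option ℕ)) := {s | s.length < m ∧ OnlyX0 s}

lemma finite_patterns (m : ℕ) : (patterns m).Finite := by
  refine ((List.finite_length_lt (Option Unit) m).image
    (List.map (Option.map fun _ => 0))).subset ?_
  rintro s ⟨hlen, hs⟩
  refine ⟨s.map (Option.map fun _ => ()), by simpa using hlen, ?_⟩
  rw [List.map_map]
  refine (List.map_congr_left fun a ha => ?_).trans s.map_id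
  rcases a with _ | j
  · rfl
  · simp [hs j ha]

instance (m : ℕ) : Finite (patterns m) := (finite_patterns m).to_subtype

/-- `CSL^m` over `{0}` for `α`-valued colourings. -/
def CarlsonSimpson (m : ℕ) (α : Type*) : Prop :=
  ∀ c : List (Option ℕ) → α, ∃ (W : ℕ → Option ℕ) (fo : ℕ → ℕ), IsOmegaVW W fo ∧
    ∃ a : α, ∀ u, IsMVarWord m u → c (substW W fo u) = a

lemma CarlsonSimpson.of_equiv {m : ℕ} {α β : Type*} (h : CarlsonSimpson m α) (e : α ≃ β) :
    CarlsonSimpson m β := by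
  intro c
  obtain ⟨W, fo, hW, a, ha⟩ := h (e.symm ∘ c)
  exact ⟨W, fo, hW, e a, fun u hu => by rw [← ha u hu, Function.comp_apply, e.apply_symm_apply]⟩

section Patterns

variable {V α : Type*} {F : SimpleGraph V}

open Classical in
/-- Colours `w` by recording, for each `τ`, the colour of the copy `e` of `F` with `e t = w[τ t]`,
if there is one. -/
noncomputable def patternColouring (χ : (F ↪g HG) → α) (m : ℕ) (w : List (Option ℕ))
    (τ : V → patterns m) : Option α :=
  if h : ∃ e : F ↪g HG, ∀ t, (e t).1 = substList w (τ t) then some (χ h.choose) else none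

lemma patternColouring_eq (χ : (F ↪g HG) → α) {m : ℕ} {w : List (Option ℕ)}
    {τ : V → patterns m} {e : F ↪g HG} (he : ∀ t, (e t).1 = substList w (τ t)) :
    patternColouring χ m w τ = some (χ e) := by
  have h : ∃ e : F ↪g HG, ∀ t, (e t).1 = substList w (τ t) := ⟨e, he⟩
  rw [patternColouring, dif_pos h]
  congr
  exact RelEmbedding.ext fun t => Subtype.ext ((h.choose_spec t).trans (he t).symm)

lemma exists_patterns_of_range_subset [Fintype V] [Nonempty V] {m : ℕ}
    (hm : 2 ^ Fintype.card V + Fintype.card V - 1 ≤ m) {W : ℕ → Option ℕ} {fo : ℕ → ℕ}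
    (hW : IsOmegaVW W fo) {e : F ↪g HG} (he : Set.range e ⊆ Set.range hW.embedding) :
    ∃ U, IsMVarWord m U ∧ ∃ τ : V → patterns m, ∀ t, (e t).1 = substList (substW W fo U) (τ t) := by
  choose v hv using fun t => he ⟨t, rfl⟩
  obtain ⟨U, hU, hs⟩ := exists_envelope hm (fun t => (v t).1)
    fun t => (isMVarWord_one_iff.mp (v t).2).1
  choose s hs using hs
  refine ⟨U, hU, fun t => ⟨s t, (hs t).1, (hs t).2.1⟩, fun t => ?_⟩
  rw [← hv t, hW.embedding_apply_val, hW.substList_substW (hU.2.1 _ (hs t).1), (hs t).2.2]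

end Patterns

theorem stmt_13_general (n : ℕ) (hn : 0 < n)
    (csl : ∀ (k : ℕ) (c : List (Option ℕ) → Fin k),
      ∃ (W : ℕ → Option ℕ) (fo : ℕ → ℕ), IsOmegaVW W fo ∧
        ∃ i : Fin k, ∀ u : List (Option ℕ),
          IsMVarWord (2 ^ n + n - 1) u → c (substW W fo u) = i)
    (F : SimpleGraph (Fin n)) :
    ∃ ℓ : ℕ, ∀ k : ℕ, 0 < k → ∀ χ : (F ↪g HG) → Fin k,
      ∃ f : HG ↪g HG,
        (χ '' {e : F ↪g HG | Set.range (⇑e) ⊆ Set.range (⇑f)}).ncard ≤ ℓ := by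
  have : Nonempty (Fin n) := ⟨⟨0, hn⟩⟩
  set m := 2 ^ n + n - 1
  refine ⟨Nat.card (Fin n → patterns m), fun k _ χ => ?_⟩
  obtain ⟨W, fo, hW, g, hg⟩ := CarlsonSimpson.of_equiv (csl _)
    (Finite.equivFin ((Fin n → patterns m) → Option (Fin k))).symm (patternColouring χ m)
  refine ⟨hW.embedding, ?_⟩
  have hsub : some '' (χ '' {e | Set.range e ⊆ Set.range hW.embedding}) ⊆ Set.range g := by
    rintro _ ⟨_, ⟨e, he, rfl⟩, rfl⟩
    obtain ⟨U, hU, τ, hτ⟩ := exists_patterns_of_range_subset (m := m) (by simp [m]) hW he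
    exact ⟨τ, by rw [← hg U hU, patternColouring_eq χ hτ]⟩
  calc _ = (some '' (χ '' {e | Set.range e ⊆ Set.range hW.embedding})).ncard :=
        (Set.ncard_image_of_injective _ (Option.some_injective _)).symm
    _ ≤ (Set.range g).ncard := Set.ncard_le_ncard hsub
    _ ≤ Nat.card (Fin n → patterns m) := by
      rw [← Set.image_univ]
      exact (Set.ncard_image_le Set.finite_univ).trans (Set.ncard_univ _).le

theorem stmt_13 (n : ℕ) (hn : 0 < n)
    (csl : ∀ (k : ℕ) (c : List (Option ℕ) → Fin k),
      ∃ (W : ℕ → Option ℕ) (fo : ℕ → ℕ), IsOmegaVW W fo ∧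
        ∃ i : Fin k, ∀ u : List (Option ℕ),
          IsMVarWord (2 ^ n + n - 1) u → c (substW W fo u) = i)
    (F : SimpleGraph (Fin n)) (hF : F.CliqueFree 3) :
    ∃ ℓ : ℕ, ∀ k : ℕ, 0 < k → ∀ χ : (F ↪g HG) → Fin k,
      ∃ f : HG ↪g HG,
        (χ '' {e : F ↪g HG | Set.range (⇑e) ⊆ Set.range (⇑f)}).ncard ≤ ℓ :=
  stmt_13_general n hn csl F
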